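/- arXiv:1503.08340 — 2 statements merged into one kernel-verified Lean document; each statement's English description precedes it below -/
import Mathlib

section
/- For the complete-graph difference matrix D, the Moore–Penrose pseudo-inverse satisfies D† = (1/n) Dᵀ. -/
/-!
`D` is `B ⊗ I_p`, where `B` is the oriented incidence matrix of the complete graph `K_n`. Its Gram
matrix `Bᵀ B` is the Laplacian `n I - J` of `K_n`, and `B J = 0` because every row of `B` sums to
zero; hence `B Bᵀ B = n B` and so `D Dᵀ D = n D`. For any real matrix with `A Aᵀ A = c A`, `c ≠ 0`,
the four Penrose conditions for `c⁻¹ Aᵀ` are immediate.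
-/

open Matrix

abbrev PairIdx (n : ℕ) := {e : Fin n × Fin n // e.1 < e.2}

/-- The complete-graph difference matrix `D`: the block of rows indexed by the pair
`(i, i')` maps `vec U` to `U_i - U_{i'}`. -/
noncomputable def Dmat (n p : ℕ) : Matrix (PairIdx n × Fin p) (Fin n × Fin p) ℝ :=
  fun ej kl =>
    (if kl.1 = ej.1.val.1 then (1 : ℝ) else if kl.1 = ej.1.val.2 then -1 else 0) *
      (if ej.2 = kl.2 then 1 else 0)

/-- `G` satisfies the four Penrose conditions for being the Moore–Penrose
pseudo-inverse of `A`. -/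
def IsMoorePenrose {m n : Type*} [Fintype m] [Fintype n]
    (A : Matrix m n ℝ) (G : Matrix n m ℝ) : Prop :=
  A * G * A = A ∧ G * A * G = G ∧ (A * G)ᵀ = A * G ∧ (G * A)ᵀ = G * A

open scoped Kronecker

theorem Fintype.two_nsmul_sum_lt_pairs {α M : Type*} [LinearOrder α] [Fintype α]
    [AddCommMonoid M] (f : α → α → M) (hf : ∀ i j, f i j = f j i) (hdiag : ∀ i, f i i = 0) :
    2 • ∑ e : {e : α × α // e.1 < e.2}, f e.1.1 e.1.2 = ∑ i, ∑ j, f i j := by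
  have hsplit : ∀ i j, f i j = (if i < j then f i j else 0) + (if j < i then f j i else 0) := by
    intro i j
    rcases lt_trichotomy i j with h | rfl | h
    · simp [h, h.not_gt]
    · simp [hdiag]
    · simp [h, h.not_gt, hf i j]
  have hlt : ∑ e : {e : α × α // e.1 < e.2}, f e.1.1 e.1.2 =
      ∑ i, ∑ j, if i < j then f i j else 0 := by
    rw [← Fintype.sum_prod_type', ← Finset.sum_filter]
    exact (Finset.sum_subtype (Finset.univ.filter fun x : α × α => x.1 < x.2) (by simp)
      fun x => f x.1 x.2).symm
  calc 2 • ∑ e : {e : α × α // e.1 < e.2}, f e.1.1 e.1.2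
      = (∑ i, ∑ j, if i < j then f i j else 0) + ∑ j, ∑ i, if i < j then f i j else 0 := by
        rw [two_nsmul, hlt, Finset.sum_comm (f := fun j i => if i < j then f i j else 0)]
    _ = ∑ i, ∑ j, f i j := by
        simp only [← Finset.sum_add_distrib, ← hsplit]

theorem isMoorePenrose_inv_smul_transpose {m n : Type*} [Fintype m] [Fintype n]
    {A : Matrix m n ℝ} {c : ℝ} (hc : c ≠ 0) (hA : A * Aᵀ * A = c • A) :
    IsMoorePenrose A (c⁻¹ • Aᵀ) := by
  have hAt : Aᵀ * A * Aᵀ = c • Aᵀ := by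
    simpa [transpose_mul, Matrix.mul_assoc] using congrArg transpose hA
  refine ⟨?_, ?_, ?_, ?_⟩
  · rw [Matrix.mul_smul, Matrix.smul_mul, hA, smul_smul, inv_mul_cancel₀ hc, one_smul]
  · rw [Matrix.smul_mul, Matrix.smul_mul, Matrix.mul_smul, hAt, smul_smul, smul_smul, mul_assoc,
      inv_mul_cancel₀ hc, mul_one]
  · rw [Matrix.mul_smul, transpose_smul, transpose_mul, transpose_transpose]
  · rw [Matrix.smul_mul, transpose_smul, transpose_mul, transpose_transpose]

def completeGraphIncidence (n : ℕ) : Matrix (PairIdx n) (Fin n) ℝ :=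
  of fun e k => (if k = e.1.1 then 1 else 0) - (if k = e.1.2 then 1 else 0)

theorem completeGraphIncidence_transpose_mul_self (n : ℕ) :
    (completeGraphIncidence n)ᵀ * completeGraphIncidence n = (n : ℝ) • 1 - of fun _ _ => 1 := by
  ext k m
  set g : Fin n → Fin n → ℝ := fun i j =>
    ((if k = i then 1 else 0) - (if k = j then 1 else 0)) *
      ((if m = i then 1 else 0) - (if m = j then 1 else 0))
  have hpairs := Fintype.two_nsmul_sum_lt_pairs g (fun i j => by ring) (fun i => by simp [g])
  have hall : ∑ i, ∑ j, g i j = 2 * ((n : ℝ) * (if k = m then 1 else 0) - 1) := by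
    simp only [g, mul_sub, mul_ite, mul_one, mul_zero, Finset.sum_sub_distrib,
      Finset.sum_ite_irrel, Finset.sum_const, Finset.card_univ, Fintype.card_fin, nsmul_eq_mul,
      Finset.sum_ite_eq, Finset.mem_univ, ↓reduceIte]
    split_ifs <;> ring
  have hentry : ((completeGraphIncidence n)ᵀ * completeGraphIncidence n) k m =
      ∑ e : PairIdx n, g e.1.1 e.1.2 := rfl
  rw [hentry, Matrix.sub_apply, Matrix.smul_apply, one_apply, of_apply, smul_eq_mul]
  rw [hall, two_nsmul] at hpairs
  linarith

theorem completeGraphIncidence_mul_allOnes (n : ℕ) :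
    completeGraphIncidence n * (of fun _ _ => 1 : Matrix (Fin n) (Fin n) ℝ) = 0 := by
  ext e k
  simp [completeGraphIncidence, mul_apply, Finset.sum_sub_distrib]

theorem completeGraphIncidence_mul_transpose_mul_self (n : ℕ) :
    completeGraphIncidence n * (completeGraphIncidence n)ᵀ * completeGraphIncidence n =
      (n : ℝ) • completeGraphIncidence n := by
  rw [Matrix.mul_assoc, completeGraphIncidence_transpose_mul_self, Matrix.mul_sub,
    completeGraphIncidence_mul_allOnes, sub_zero, Matrix.mul_smul, Matrix.mul_one]

theorem Dmat_eq_kronecker (n p : ℕ) :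
    Dmat n p = completeGraphIncidence n ⊗ₖ (1 : Matrix (Fin p) (Fin p) ℝ) := by
  ext ⟨e, j⟩ ⟨k, l⟩
  have he : e.1.1 ≠ e.1.2 := e.2.ne
  simp only [Dmat, completeGraphIncidence, kroneckerMap_apply, of_apply, one_apply]
  split_ifs <;> simp_all

theorem Dmat_mul_transpose_mul_self (n p : ℕ) :
    Dmat n p * (Dmat n p)ᵀ * Dmat n p = (n : ℝ) • Dmat n p := by
  rw [Dmat_eq_kronecker, ← kroneckerMap_transpose, transpose_one, ← mul_kronecker_mul,
    ← mul_kronecker_mul, completeGraphIncidence_mul_transpose_mul_self, Matrix.mul_one,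
    Matrix.mul_one, smul_kronecker]

theorem stmt1_general (n p : ℕ) (hn : 2 ≤ n) :
    IsMoorePenrose (Dmat n p) ((n : ℝ)⁻¹ • (Dmat n p)ᵀ) :=
  isMoorePenrose_inv_smul_transpose (Nat.cast_ne_zero.mpr (by omega))
    (Dmat_mul_transpose_mul_self n p)

/-- the Moore–Penrose pseudo-inverse of D is (1/n) Dᵀ. -/
theorem stmt1 (n p : ℕ) (hn : 2 ≤ n) (hp : 1 ≤ p) :
    IsMoorePenrose (Dmat n p) ((n : ℝ)⁻¹ • (Dmat n p)ᵀ) :=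
  stmt1_general n p hn
end

section
/- Group soft-thresholding: for a ∈ ℝ^p and λ ≥ 0, the unique minimizer of g(γ) = (1/2)‖a − γ‖₂² + λ‖γ‖₂ over ℝ^p is γ̂ = max(1 − λ/‖a‖₂, 0)·a (with γ̂ = 0 if a = 0); in particular γ̂ = 0 iff ‖a‖₂ ≤ λ. -/
open RealInnerProductSpace

/-- group soft-thresholding. For a ∈ ℝ^p and λ ≥ 0, the unique minimizer
of g(γ) = (1/2)‖a − γ‖² + λ‖γ‖ over ℝ^p is γ̂ = max(1 − λ/‖a‖, 0) • a, and γ̂ = 0 iff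
‖a‖ ≤ λ. -/
theorem stmt10 (p : ℕ) (a : EuclideanSpace ℝ (Fin p)) (lam : ℝ) (hlam : 0 ≤ lam) :
    ∀ ghat : EuclideanSpace ℝ (Fin p), ghat = (max (1 - lam / ‖a‖) 0) • a →
      (∀ γ : EuclideanSpace ℝ (Fin p),
          (1/2) * ‖a - ghat‖^2 + lam * ‖ghat‖ ≤ (1/2) * ‖a - γ‖^2 + lam * ‖γ‖) ∧
        (∀ γ : EuclideanSpace ℝ (Fin p),
          (1/2) * ‖a - γ‖^2 + lam * ‖γ‖ = (1/2) * ‖a - ghat‖^2 + lam * ‖ghat‖ → γ = ghat) ∧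
        (ghat = 0 ↔ ‖a‖ ≤ lam) := by
  intro ghat hghat
  set c : ℝ := max (1 - lam / ‖a‖) 0 with hc
  have hc0 : 0 ≤ c := le_max_right _ _
  have hnormghat : ‖ghat‖ = c * ‖a‖ := by
    rw [hghat, norm_smul, Real.norm_eq_abs, abs_of_nonneg hc0]
  have key : ∀ γ : EuclideanSpace ℝ (Fin p),
      0 ≤ ⟪a - ghat, ghat - γ⟫ + lam * ‖γ‖ - lam * ‖ghat‖ := by
    intro γ
    by_cases ha : a = 0
    · have hg0 : ghat = 0 := by rw [hghat, ha, smul_zero]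
      rw [hg0, ha]
      simp
      positivity
    · have hna : (0:ℝ) < ‖a‖ := norm_pos_iff.mpr ha
      by_cases hle : ‖a‖ ≤ lam
      · have hc0' : c = 0 := by
          rw [hc]
          apply max_eq_right
          rw [sub_nonpos, le_div_iff₀ hna]
          linarith
        have hg0 : ghat = 0 := by rw [hghat, hc0', zero_smul]
        rw [hg0]
        have h1 : |⟪a, γ⟫| ≤ ‖a‖ * ‖γ‖ := abs_real_inner_le_norm a γ
        have h2 : ⟪a - 0, (0:EuclideanSpace ℝ (Fin p)) - γ⟫ = -⟪a, γ⟫ := by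
          simp [inner_sub_right]
        rw [h2]
        have h3 : ‖a‖ * ‖γ‖ ≤ lam * ‖γ‖ :=
          mul_le_mul_of_nonneg_right hle (norm_nonneg _)
        have h4 : -⟪a, γ⟫ ≥ -(‖a‖ * ‖γ‖) := by
          have := abs_le.mp h1
          linarith [this.1]
        rw [norm_zero]
        linarith
      · push_neg at hle
        have hcval : c = 1 - lam / ‖a‖ := by
          rw [hc]
          apply max_eq_left
          rw [sub_nonneg, div_le_iff₀ hna]
          nlinarith
        have hag : a - ghat = (lam / ‖a‖) • a := by
          rw [hghat, hcval]
          module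
        have hinner : ⟪a - ghat, ghat - γ⟫
            = (lam / ‖a‖) * (c * ‖a‖^2) - (lam / ‖a‖) * ⟪a, γ⟫ := by
          rw [hag, real_inner_smul_left, inner_sub_right, hghat,
            real_inner_smul_right, real_inner_self_eq_norm_sq]
          ring
        rw [hinner]
        have hcs : ⟪a, γ⟫ ≤ ‖a‖ * ‖γ‖ := real_inner_le_norm a γ
        have ht : 0 ≤ lam / ‖a‖ := div_nonneg hlam hna.le
        have e1 : (lam / ‖a‖) * (c * ‖a‖^2) = lam * (c * ‖a‖) := by
          field_simp
        have e2 : (lam / ‖a‖) * (‖a‖ * ‖γ‖) = lam * ‖γ‖ := by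
          field_simp
        have h5 : (lam / ‖a‖) * ⟪a, γ⟫ ≤ lam * ‖γ‖ := by
          calc (lam / ‖a‖) * ⟪a, γ⟫ ≤ (lam / ‖a‖) * (‖a‖ * ‖γ‖) :=
                mul_le_mul_of_nonneg_left hcs ht
            _ = lam * ‖γ‖ := e2
        rw [e1, hnormghat]
        linarith
  have expand : ∀ γ : EuclideanSpace ℝ (Fin p),
      ‖a - γ‖^2 = ‖a - ghat‖^2 + 2 * ⟪a - ghat, ghat - γ⟫ + ‖ghat - γ‖^2 := by
    intro γ
    have h : a - γ = (a - ghat) + (ghat - γ) := by abel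
    rw [h, @norm_add_sq_real]
  refine ⟨?_, ?_, ?_⟩
  · intro γ
    have := key γ
    have := expand γ
    nlinarith [sq_nonneg ‖ghat - γ‖]
  · intro γ heq
    have h1 := key γ
    have h2 := expand γ
    have h3 : ‖ghat - γ‖^2 ≤ 0 := by nlinarith
    have h4 : ‖ghat - γ‖ = 0 := by nlinarith [sq_nonneg ‖ghat - γ‖, norm_nonneg (ghat - γ)]
    have h5 : ghat - γ = 0 := norm_eq_zero.mp h4
    have : ghat = γ := by
      have := sub_eq_zero.mp h5
      exact this
    exact this.symm
  · constructor
    · intro hg0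
      by_cases ha : a = 0
      · rw [ha, norm_zero]; exact hlam
      · have hna : (0:ℝ) < ‖a‖ := norm_pos_iff.mpr ha
        rw [hghat] at hg0
        rcases smul_eq_zero.mp hg0 with h | h
        · have : 1 - lam / ‖a‖ ≤ 0 := by
            by_contra hcon
            push_neg at hcon
            rw [hc, max_eq_left hcon.le] at h
            linarith
          rw [sub_nonpos, le_div_iff₀ hna] at this
          nlinarith
        · exact absurd h ha
    · intro hle
      by_cases ha : a = 0
      · rw [hghat, ha, smul_zero]
      · have hna : (0:ℝ) < ‖a‖ := norm_pos_iff.mpr ha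
        have : c = 0 := by
          rw [hc]
          apply max_eq_right
          rw [sub_nonpos, le_div_iff₀ hna]
          linarith
        rw [hghat, this, zero_smul]
end
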